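/- If n ≡ −1 (mod 2^j) (i.e., 2^j divides n+1), then the first 2j Collatz iterates of n follow the alternating pattern O,E,O,E,...,O,E and Col^[2j](n) = 3^j·(n+1)/2^j − 1. -/

import Mathlib

def col (n : ℕ) : ℕ := if n % 2 = 0 then n / 2 else 3 * n + 1

lemma col_odd (n : ℕ) (h : Odd n) : col n = 3 * n + 1 := by
  simp [col, Nat.odd_iff.mp h]

lemma col_even (n : ℕ) (h : n % 2 = 0) : col n = n / 2 := by
  simp [col, h]

lemma col2 (n m : ℕ) (hn : Odd n) (hm : n + 1 = 2 * m) :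
    col (col n) = 3 * m - 1 := by
  have h1 : col n = 3 * n + 1 := col_odd n hn
  have h2 : 3 * n + 1 = 2 * (3 * m - 1) := by omega
  rw [h1, h2, col_even _ (by omega), Nat.mul_div_cancel_left _ (by norm_num)]

theorem stmt12 : ∀ j n : ℕ, 1 ≤ j → 0 < n → Odd n → 2 ^ j ∣ n + 1 →
    (∀ t : ℕ, t < j → Odd (col^[2 * t] n) ∧ Even (col^[2 * t + 1] n)) ∧
    col^[2 * j] n = 3 ^ j * (n + 1) / 2 ^ j - 1 := by
  intro j
  induction j with
  | zero => intro n h; omega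
  | succ j ih =>
    intro n hj hn hodd hdvd
    obtain ⟨m, hm⟩ := hdvd
    have hm0 : 0 < m := by
      rcases Nat.eq_zero_or_pos m with h | h
      · subst h; omega
      · exact h
    have hp : 0 < 2 ^ j := Nat.pow_pos (by norm_num : 0 < 2)
    have hK : 0 < 2 ^ j * m := Nat.mul_pos hp hm0
    have hmeq : n + 1 = 2 * (2 ^ j * m) := by rw [hm, pow_succ]; ring
    have hc2 : col (col n) = 3 * (2 ^ j * m) - 1 := col2 n _ hodd hmeq
    have hcn : col n = 3 * n + 1 := col_odd n hodd
    have heven1 : Even (col n) := by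
      rw [hcn]
      have := Nat.odd_iff.mp hodd
      exact Nat.even_iff.mpr (by omega)
    have hit2 : col^[2] n = col (col n) := by
      simp [Function.iterate_succ_apply']
    rcases Nat.eq_zero_or_pos j with hj0 | hjpos
    · subst hj0
      constructor
      · intro t ht
        interval_cases t
        simpa using ⟨hodd, heven1⟩
      · rw [show 2 * 1 = 2 from rfl, hit2, hc2]
        have hm' : n + 1 = 2 * m := by simpa using hm
        norm_num
        omega
    · have hn'1 : col (col n) + 1 = 2 ^ j * (3 * m) := by
        rw [hc2]
        have e : 3 * (2 ^ j * m) = 2 ^ j * (3 * m) := by ring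
        omega
      have hodd' : Odd (col (col n)) := by
        rw [Nat.odd_iff]
        have h2d : 2 ∣ 2 ^ j := dvd_pow_self 2 (by omega)
        have : 2 ∣ col (col n) + 1 := hn'1 ▸ Dvd.dvd.mul_right h2d _
        omega
      have hpos'' : 0 < col (col n) := by
        have h2 : 2 ≤ 2 ^ j := by
          calc 2 = 2 ^ 1 := by norm_num
          _ ≤ 2 ^ j := Nat.pow_le_pow_right (by norm_num) hjpos
        nlinarith [hn'1]
      have hdvd' : 2 ^ j ∣ col (col n) + 1 := ⟨3 * m, hn'1⟩
      obtain ⟨ihpat, ihval⟩ := ih (col (col n)) hjpos hpos'' hodd' hdvd'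
      constructor
      · intro t ht
        rcases t with _ | s
        · simpa using ⟨hodd, heven1⟩
        · refine ⟨?_, ?_⟩
          · rw [show 2 * (s + 1) = 2 * s + 2 from by ring,
              Function.iterate_add_apply, hit2]
            exact (ihpat s (by omega)).1
          · rw [show 2 * (s + 1) + 1 = 2 * s + 1 + 2 from by ring,
              Function.iterate_add_apply, hit2]
            exact (ihpat s (by omega)).2
      · rw [show 2 * (j + 1) = 2 * j + 2 from by ring,
          Function.iterate_add_apply, hit2, ihval, hn'1, hm]
        have e1 : 3 ^ j * (2 ^ j * (3 * m)) = 2 ^ j * (3 ^ (j + 1) * m) := by ring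
        have e2 : 3 ^ (j + 1) * (2 ^ (j + 1) * m) = 2 ^ (j + 1) * (3 ^ (j + 1) * m) := by
          ring
        rw [e1, e2, Nat.mul_div_cancel_left _ hp,
          Nat.mul_div_cancel_left _ (Nat.pow_pos (by norm_num : 0 < 2) : 0 < 2 ^ (j + 1))]
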